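/- For every q ∈ ℂ with |q| < 1 and every x ∈ ℂ, Euler's identity holds: ∏_{n≥0}(1 - x q^n) = ∑_{n≥0} (-1)^n · q^{n(n-1)/2} · x^n / ∏_{k=1}^n (1 - q^k), the series on the right converging absolutely. -/

import Mathlib

/-!
Write `S(x) = ∑ aₙ xⁿ` for the right-hand side. The coefficients satisfy
`aₙ₊₁ (1 - qⁿ⁺¹) = -qⁿ aₙ`, which makes the series converge for every `x` (ratio test) and gives
the functional equation `S(x) = (1 - x) S(qx)`. Iterating it, `S(x) = (x;q)_N · S(qᴺx)`, and
`S(qᴺx) → S(0) = 1` as `N → ∞`, so the partial products `(x;q)_N` converge to `S(x)`.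
-/

open Finset Filter Topology

variable {𝕜 : Type*} [NormedField 𝕜]

noncomputable def eulerCoeff (q : 𝕜) (n : ℕ) : 𝕜 :=
  (-1) ^ n * q ^ (n * (n - 1) / 2) / ∏ k ∈ range n, (1 - q ^ (k + 1))

noncomputable def eulerSeries (q x : 𝕜) : 𝕜 :=
  ∑' n, eulerCoeff q n * x ^ n

lemma one_sub_norm_le_norm_one_sub_pow_succ {q : 𝕜} (hq : ‖q‖ ≤ 1) (k : ℕ) :
    1 - ‖q‖ ≤ ‖1 - q ^ (k + 1)‖ :=
  calc 1 - ‖q‖ ≤ 1 - ‖q‖ ^ (k + 1) := by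
        gcongr; exact pow_le_of_le_one (norm_nonneg q) hq k.succ_ne_zero
    _ = ‖(1 : 𝕜)‖ - ‖q ^ (k + 1)‖ := by rw [norm_one, norm_pow]
    _ ≤ ‖1 - q ^ (k + 1)‖ := norm_sub_norm_le _ _

lemma one_sub_pow_succ_ne_zero {q : 𝕜} (hq : ‖q‖ < 1) (k : ℕ) : 1 - q ^ (k + 1) ≠ 0 :=
  norm_pos_iff.mp <| (sub_pos.mpr hq).trans_le (one_sub_norm_le_norm_one_sub_pow_succ hq.le k)

@[simp]
lemma eulerCoeff_zero (q : 𝕜) : eulerCoeff q 0 = 1 := by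
  simp [eulerCoeff]

lemma eulerCoeff_succ_mul {q : 𝕜} {n : ℕ} (h : 1 - q ^ (n + 1) ≠ 0) :
    eulerCoeff q (n + 1) * (1 - q ^ (n + 1)) = -q ^ n * eulerCoeff q n := by
  have hexp : (n + 1) * (n + 1 - 1) / 2 = n * (n - 1) / 2 + n := by
    simp only [← Nat.choose_two_right, Nat.choose_succ_succ', Nat.choose_one_right, add_comm]
  rw [eulerCoeff, eulerCoeff, prod_range_succ, ← div_div, div_mul_cancel₀ _ h, hexp]
  ring

lemma norm_eulerCoeff_succ_le {q : 𝕜} (hq : ‖q‖ < 1) (n : ℕ) :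
    ‖eulerCoeff q (n + 1)‖ ≤ ‖q‖ ^ n / (1 - ‖q‖) * ‖eulerCoeff q n‖ := by
  have hrec := congrArg norm (eulerCoeff_succ_mul (one_sub_pow_succ_ne_zero hq n))
  rw [norm_mul, norm_mul, norm_neg, norm_pow] at hrec
  rw [div_mul_eq_mul_div, le_div_iff₀ (sub_pos.mpr hq), ← hrec]
  gcongr
  exact one_sub_norm_le_norm_one_sub_pow_succ hq.le n

lemma summable_norm_eulerCoeff_mul_pow {q : 𝕜} (hq : ‖q‖ < 1) (x : 𝕜) :
    Summable fun n ↦ ‖eulerCoeff q n * x ^ n‖ := by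
  have hratio : Tendsto (fun n ↦ ‖x‖ * (‖q‖ ^ n / (1 - ‖q‖))) atTop (𝓝 0) := by
    simpa using ((tendsto_pow_atTop_nhds_zero_of_lt_one (norm_nonneg q) hq).div_const
      (1 - ‖q‖)).const_mul ‖x‖
  refine summable_of_ratio_norm_eventually_le one_half_lt_one ?_
  filter_upwards [hratio.eventually_le_const one_half_pos] with n hn
  simp only [norm_norm, norm_mul, norm_pow, pow_succ]
  calc ‖eulerCoeff q (n + 1)‖ * (‖x‖ ^ n * ‖x‖)
      ≤ ‖q‖ ^ n / (1 - ‖q‖) * ‖eulerCoeff q n‖ * (‖x‖ ^ n * ‖x‖) := by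
        gcongr; exact norm_eulerCoeff_succ_le hq n
    _ = ‖x‖ * (‖q‖ ^ n / (1 - ‖q‖)) * (‖eulerCoeff q n‖ * ‖x‖ ^ n) := by ring
    _ ≤ 1 / 2 * (‖eulerCoeff q n‖ * ‖x‖ ^ n) := by gcongr

variable [CompleteSpace 𝕜]

lemma eulerSeries_eq_one_sub_mul {q : 𝕜} (hq : ‖q‖ < 1) (x : 𝕜) :
    eulerSeries q x = (1 - x) * eulerSeries q (q * x) := by
  have hsum (y : 𝕜) := (summable_norm_eulerCoeff_mul_pow hq y).of_norm
  have hdiff : eulerSeries q x - eulerSeries q (q * x) = -x * eulerSeries q (q * x) :=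
    calc eulerSeries q x - eulerSeries q (q * x)
        = ∑' n, (eulerCoeff q n * x ^ n - eulerCoeff q n * (q * x) ^ n) :=
          ((hsum x).tsum_sub (hsum (q * x))).symm
      _ = ∑' n, (eulerCoeff q (n + 1) * x ^ (n + 1)
            - eulerCoeff q (n + 1) * (q * x) ^ (n + 1)) := by
          rw [((hsum x).sub (hsum (q * x))).tsum_eq_zero_add]
          simp
      _ = ∑' n, -x * (eulerCoeff q n * (q * x) ^ n) := by
          refine tsum_congr fun n ↦ ?_
          linear_combination x ^ (n + 1) * eulerCoeff_succ_mul (one_sub_pow_succ_ne_zero hq n)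
      _ = -x * eulerSeries q (q * x) := tsum_mul_left
  linear_combination hdiff

lemma prod_one_sub_mul_pow_mul_eulerSeries {q : 𝕜} (hq : ‖q‖ < 1) (x : 𝕜) (N : ℕ) :
    (∏ k ∈ range N, (1 - x * q ^ k)) * eulerSeries q (q ^ N * x) = eulerSeries q x := by
  induction N with
  | zero => simp
  | succ N ih =>
    rw [prod_range_succ, ← ih, eulerSeries_eq_one_sub_mul hq (q ^ N * x), pow_succ', mul_assoc q]
    ring

lemma tendsto_eulerSeries_nhds_zero {q : 𝕜} (hq : ‖q‖ < 1) :
    Tendsto (eulerSeries q) (𝓝 0) (𝓝 1) := by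
  have hlim : ∀ n, Tendsto (fun y ↦ eulerCoeff q n * y ^ n) (𝓝 0) (𝓝 (eulerCoeff q n * 0 ^ n)) :=
    fun n ↦ ((continuous_pow n).const_mul _).tendsto 0
  have hbound : ∀ᶠ y in 𝓝 (0 : 𝕜), ∀ n, ‖eulerCoeff q n * y ^ n‖ ≤ ‖eulerCoeff q n * 1 ^ n‖ := by
    filter_upwards [Metric.closedBall_mem_nhds (0 : 𝕜) one_pos] with y hy n
    rw [mem_closedBall_zero_iff] at hy
    simp only [norm_mul, norm_pow, one_pow, mul_one]
    exact mul_le_of_le_one_right (norm_nonneg _) (pow_le_one₀ (norm_nonneg y) hy)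
  have h := tendsto_tsum_of_dominated_convergence (summable_norm_eulerCoeff_mul_pow hq 1)
    hlim hbound
  rwa [tsum_eq_single 0 fun n hn ↦ by simp [hn], pow_zero, mul_one, eulerCoeff_zero] at h

lemma multipliable_one_sub_mul_pow {q : 𝕜} (hq : ‖q‖ < 1) (x : 𝕜) :
    Multipliable fun n : ℕ ↦ 1 - x * q ^ n := by
  simp only [sub_eq_add_neg]
  refine multipliable_one_add_of_summable ?_
  simpa [norm_mul, norm_pow] using
    (summable_geometric_of_lt_one (norm_nonneg q) hq).mul_left ‖x‖

theorem tprod_one_sub_mul_pow_eq_eulerSeries {q : 𝕜} (hq : ‖q‖ < 1) (x : 𝕜) :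
    ∏' n : ℕ, (1 - x * q ^ n) = eulerSeries q x := by
  have hprod := (multipliable_one_sub_mul_pow hq x).hasProd.tendsto_prod_nat
  have htail : Tendsto (fun N : ℕ ↦ eulerSeries q (q ^ N * x)) atTop (𝓝 1) :=
    (tendsto_eulerSeries_nhds_zero hq).comp <| by
      simpa using (tendsto_pow_atTop_nhds_zero_of_norm_lt_one hq).mul_const x
  have h := hprod.mul htail
  simp only [prod_one_sub_mul_pow_mul_eulerSeries hq, mul_one] at h
  exact tendsto_nhds_unique h tendsto_const_nhds

/-- Euler's identity `(x;q)_∞ = ∑_{n≥0} (-1)^n q^{n(n-1)/2} x^n / (q;q)_n` for `|q| < 1`,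
with the series converging absolutely. -/
theorem stmt13 (q x : ℂ) (hq : ‖q‖ < 1) :
    Summable (fun n : ℕ =>
      ‖(-1) ^ n * q ^ (n * (n - 1) / 2) * x ^ n /
        ∏ k ∈ Finset.range n, (1 - q ^ (k + 1))‖) ∧
    (∏' n : ℕ, (1 - x * q ^ n)) =
      ∑' n : ℕ, (-1) ^ n * q ^ (n * (n - 1) / 2) * x ^ n /
        ∏ k ∈ Finset.range n, (1 - q ^ (k + 1)) := by
  simp only [mul_div_right_comm _ (x ^ _)]
  exact ⟨summable_norm_eulerCoeff_mul_pow hq x, tprod_one_sub_mul_pow_eq_eulerSeries hq x⟩
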